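/- For n ≥ 6, c < 0 and y > -n²c, one has 2√y · α̊'(y) < √(α̊(y)). -/

import Mathlib

/-!
Write `u = √y` and `v = √(y + 4(n-1)c)`, so that `c = (v² - u²)/(4(n-1))`. In these variables
`α̊(y) = (nv - (n-2)u)² / (4(n-1)n)` and `2u·α̊'(y) = (nv - (n-2)u)(nu - (n-2)v) / (2(n-1)nv)`,
while `y > -n²c` says exactly `(n-2)u < nv`. The claim thus reduces to
`nu - (n-2)v < √((n-1)n)·v`, which follows from `u < nv/(n-2)` together with
`n² ≤ (n-2)(n-2+√((n-1)n))`, true for `n ≥ 6` because `√((n-1)n) > n-1`.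
-/

open Real

/-- The function `α̊` of the paper, with the integer `n` replaced by a real parameter `N`. -/
noncomputable def alphaCirc (N c z : ℝ) : ℝ :=
  N * c + ((N ^ 2 - 2 * N + 2) / (2 * (N - 1) * N)) * z
    - ((N - 2) / (2 * (N - 1))) * √(z ^ 2 + 4 * (N - 1) * c * z)

lemma sqrt_sq_add_mul {y : ℝ} (a : ℝ) (hy : 0 ≤ y) : √(y ^ 2 + a * y) = √y * √(y + a) := by
  rw [← sqrt_mul hy]; ring_nf

lemma sub_one_lt_sqrt_sub_one_mul_self {N : ℝ} (hN : 1 < N) : N - 1 < √((N - 1) * N) :=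
  lt_sqrt_of_sq_lt (by nlinarith)

lemma mul_sub_lt_sqrt_mul_of_lt {N u v : ℝ} (hN : 6 ≤ N) (hv : 0 < v) (h : (N - 2) * u < N * v) :
    N * u - (N - 2) * v < √((N - 1) * N) * v := by
  have hw := sub_one_lt_sqrt_sub_one_mul_self (N := N) (by linarith)
  -- `(N - 2)√((N-1)N) > (N - 2)(N - 1) ≥ 4(N - 1)`: this is where `N ≥ 6` enters.
  have hsq : N ^ 2 ≤ (N - 2) * (N - 2 + √((N - 1) * N)) := by nlinarith
  have hscaled : (N - 2) * (N * u) < (N - 2) * ((N - 2 + √((N - 1) * N)) * v) := by nlinarith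
  nlinarith

section

variable {N c y : ℝ}

lemma sq_mul_add_eq :
    N ^ 2 * (y + 4 * (N - 1) * c) = (N - 2) ^ 2 * y + 4 * (N - 1) * (y + N ^ 2 * c) := by
  ring

lemma add_mul_pos_of_neg_sq_mul_lt (hN : 1 < N) (hy : 0 ≤ y) (hyc : -N ^ 2 * c < y) :
    0 < y + 4 * (N - 1) * c := by
  nlinarith [sq_mul_add_eq (N := N) (c := c) (y := y)]

lemma sub_two_mul_sqrt_lt (hN : 1 < N) (hy : 0 ≤ y) (hyc : -N ^ 2 * c < y) :
    (N - 2) * √y < N * √(y + 4 * (N - 1) * c) := by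
  have hv := add_mul_pos_of_neg_sq_mul_lt hN hy hyc
  refine lt_of_pow_lt_pow_left₀ 2 (by positivity) ?_
  rw [mul_pow, mul_pow, sq_sqrt hy, sq_sqrt hv.le]
  nlinarith [sq_mul_add_eq (N := N) (c := c) (y := y)]

lemma alphaCirc_eq_sq (hN0 : N ≠ 0) (hN1 : N ≠ 1) (hy : 0 ≤ y) (hv : 0 ≤ y + 4 * (N - 1) * c) :
    alphaCirc N c y
      = (N * √(y + 4 * (N - 1) * c) - (N - 2) * √y) ^ 2 / (4 * (N - 1) * N) := by
  have hN1 : N - 1 ≠ 0 := sub_ne_zero.2 hN1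
  rw [alphaCirc, sqrt_sq_add_mul _ hy]
  have hu := sq_sqrt hy
  have hv := sq_sqrt hv
  generalize √(y + 4 * (N - 1) * c) = v at hv ⊢
  generalize √y = u at hu ⊢
  subst hu
  obtain rfl : c = (v ^ 2 - u ^ 2) / (4 * (N - 1)) := by field_simp; linarith
  field_simp
  ring

lemma hasDerivAt_alphaCirc (hN0 : N ≠ 0) (hN1 : N ≠ 1) (hy : 0 < y)
    (hv : 0 < y + 4 * (N - 1) * c) :
    HasDerivAt (alphaCirc N c)
      ((N * √(y + 4 * (N - 1) * c) - (N - 2) * √y) * (N * √y - (N - 2) * √(y + 4 * (N - 1) * c))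
        / (4 * (N - 1) * N * √y * √(y + 4 * (N - 1) * c))) y := by
  have hN1 : N - 1 ≠ 0 := sub_ne_zero.2 hN1
  have hq0 : y ^ 2 + 4 * (N - 1) * c * y ≠ 0 := by nlinarith
  have hq : HasDerivAt (fun z => z ^ 2 + 4 * (N - 1) * c * z) (2 * y + 4 * (N - 1) * c) y :=
    ((hasDerivAt_pow 2 y).add ((hasDerivAt_id' y).const_mul (4 * (N - 1) * c))).congr_deriv
      (by ring)
  refine HasDerivAt.congr_deriv (f := alphaCirc N c) ((((hasDerivAt_id' y).const_mul
    ((N ^ 2 - 2 * N + 2) / (2 * (N - 1) * N))).const_add (N * c)).sub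
    ((hq.sqrt hq0).const_mul ((N - 2) / (2 * (N - 1))))) ?_
  rw [sqrt_sq_add_mul _ hy.le]
  have hu0 := sqrt_pos.2 hy
  have hv0 := sqrt_pos.2 hv
  have hu := sq_sqrt hy.le
  have hv := sq_sqrt hv.le
  generalize √(y + 4 * (N - 1) * c) = v at hv hv0 ⊢
  generalize √y = u at hu hu0 ⊢
  subst hu
  obtain rfl : c = (v ^ 2 - u ^ 2) / (4 * (N - 1)) := by field_simp; linarith
  field_simp
  ring

theorem two_mul_sqrt_mul_deriv_alphaCirc_lt (hN : 6 ≤ N) (hy : 0 < y) (hyc : -N ^ 2 * c < y) :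
    2 * √y * deriv (alphaCirc N c) y < √(alphaCirc N c y) := by
  have hv := add_mul_pos_of_neg_sq_mul_lt (by linarith) hy.le hyc
  have hlt := sub_two_mul_sqrt_lt (by linarith) hy.le hyc
  have hP := sub_pos.2 hlt
  have hQ := mul_sub_lt_sqrt_mul_of_lt hN (sqrt_pos.2 hv) hlt
  have hNN : 0 < (N - 1) * N := by nlinarith
  have hw : √(4 * (N - 1) * N) = 2 * √((N - 1) * N) := by
    rw [mul_assoc, sqrt_mul zero_le_four, show (4 : ℝ) = 2 ^ 2 by norm_num, sqrt_sq zero_le_two]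
  rw [(hasDerivAt_alphaCirc (by linarith) (by linarith) hy hv).deriv,
    alphaCirc_eq_sq (by linarith) (by linarith) hy.le hv.le, sqrt_div (sq_nonneg _),
    sqrt_sq hP.le, hw]
  have hw2 := sq_sqrt hNN.le
  have hu0 := sqrt_pos.2 hy
  have hv0 := sqrt_pos.2 hv
  have hw0 := sqrt_pos.2 hNN
  set u := √y
  set v := √(y + 4 * (N - 1) * c)
  set w := √((N - 1) * N)
  calc 2 * u * ((N * v - (N - 2) * u) * (N * u - (N - 2) * v) / (4 * (N - 1) * N * u * v))
      = (N * v - (N - 2) * u) * (N * u - (N - 2) * v) / (2 * w ^ 2 * v) := by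
        rw [hw2]; field_simp; ring
    _ < (N * v - (N - 2) * u) * (w * v) / (2 * w ^ 2 * v) := by gcongr
    _ = (N * v - (N - 2) * u) / (2 * w) := by field_simp

end

theorem stmt_7 (n : ℕ) (hn : 6 ≤ n) (c : ℝ) (hc : c < 0) (y : ℝ) (hy : y > -(n^2 : ℝ) * c)
    (α : ℝ → ℝ)
    (hα : ∀ z : ℝ, α z = n * c + ((n^2 - 2*n + 2 : ℝ) / (2 * (n - 1) * n)) * z
      - ((n - 2 : ℝ) / (2 * (n - 1))) * Real.sqrt (z^2 + 4 * (n - 1) * c * z)) :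
    2 * Real.sqrt y * deriv α y < Real.sqrt (α y) := by
  obtain rfl : α = alphaCirc n c := funext hα
  have hy0 : 0 < y := lt_of_le_of_lt (by nlinarith) hy
  exact two_mul_sqrt_mul_deriv_alphaCirc_lt (by exact_mod_cast hn) hy0 hy
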